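/- Let H be a separable real Hilbert space, ρ > 0, and X ∈ H. Then ⟨X, (ρI + XXᵀ)^{-1} X⟩ = ‖X‖² / (ρ + ‖X‖²). Moreover, if V is any bounded positive self-adjoint operator on H with XXᵀ ⪯ V (i.e., V − XXᵀ is positive), then ‖(ρI + V)^{-1/2} X‖² ≤ ‖X‖² / (ρ + ‖X‖²) ≤ 1. -/

import Mathlib

open MeasureTheory Filter Real
open scoped RealInnerProductSpace

noncomputable def outerProd {H : Type*} [NormedAddCommGroup H] [InnerProductSpace ℝ H]
    (x : H) : H →L[ℝ] H :=
  (innerSL ℝ x).smulRight x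

/-!
`ρ I + X Xᵀ` maps `X` to `(ρ + ‖X‖²) X`, which gives the first identity. For the inequality put
`z = (ρ I + V)⁻¹ X`, so that `‖(ρ I + V)^{-1/2} X‖² = ⟪X, z⟫ = ⟪(ρ I + V) z, z⟫`. Then
`X Xᵀ ⪯ V` gives `ρ ‖z‖² + ⟪X, z⟫² ≤ ⟪X, z⟫`, and Cauchy–Schwarz `⟪X, z⟫² ≤ ‖X‖² ‖z‖²` turns this
into `⟪X, z⟫ (ρ + ‖X‖²) ≤ ‖X‖²`.
-/

section

variable {H : Type*} [NormedAddCommGroup H] [InnerProductSpace ℝ H]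

lemma outerProd_apply (x y : H) : outerProd x y = ⟪x, y⟫ • x := rfl

lemma smul_one_add_outerProd_apply_self (ρ : ℝ) (X : H) :
    (ρ • (1 : H →L[ℝ] H) + outerProd X) X = (ρ + ‖X‖ ^ 2) • X := by
  simp [outerProd_apply, add_smul]

lemma apply_self_eq_inv_smul_of_comp_smul_one_add_outerProd {ρ : ℝ} (hρ : 0 < ρ) (X : H)
    {B : H →L[ℝ] H} (hB : B ∘L (ρ • (1 : H →L[ℝ] H) + outerProd X) = 1) :
    B X = (ρ + ‖X‖ ^ 2)⁻¹ • X := by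
  have hden : ρ + ‖X‖ ^ 2 ≠ 0 := by positivity
  have h := congrArg (fun T : H →L[ℝ] H => T ((ρ + ‖X‖ ^ 2)⁻¹ • X)) hB
  rw [ContinuousLinearMap.comp_apply, map_smul, smul_one_add_outerProd_apply_self, smul_smul,
    inv_mul_cancel₀ hden, one_smul] at h
  simpa using h

lemma sq_inner_le_inner_of_isPositive_sub_outerProd {V : H →L[ℝ] H} {X : H}
    (hle : (V - outerProd X).IsPositive) (z : H) : ⟪X, z⟫ ^ 2 ≤ ⟪V z, z⟫ := by
  have h := hle.inner_nonneg_left z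
  rw [sub_apply, outerProd_apply, inner_sub_left, real_inner_smul_left] at h
  nlinarith [h]

lemma inner_mul_le_norm_sq_of_le_inner {ρ : ℝ} (hρ : 0 ≤ ρ) (X z : H)
    (h : ρ * ‖z‖ ^ 2 + ⟪X, z⟫ ^ 2 ≤ ⟪X, z⟫) : ⟪X, z⟫ * (ρ + ‖X‖ ^ 2) ≤ ‖X‖ ^ 2 := by
  have hcs : ⟪X, z⟫ ^ 2 ≤ ‖X‖ ^ 2 * ‖z‖ ^ 2 := by
    rw [← mul_pow, ← sq_abs]
    exact pow_le_pow_left₀ (abs_nonneg _) (abs_real_inner_le_norm X z) 2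
  rcases le_or_gt ⟪X, z⟫ 0 with ht | ht
  · nlinarith [sq_nonneg ‖X‖]
  · -- multiply `h` by `‖X‖²` and bound `ρ ‖X‖² ‖z‖²` below by `ρ ⟪X, z⟫²`; then cancel `⟪X, z⟫`
    have : ⟪X, z⟫ * (⟪X, z⟫ * (ρ + ‖X‖ ^ 2)) ≤ ⟪X, z⟫ * ‖X‖ ^ 2 := by
      nlinarith [mul_le_mul_of_nonneg_left hcs hρ, mul_le_mul_of_nonneg_left h (sq_nonneg ‖X‖)]
    exact le_of_mul_le_mul_left this ht

lemma norm_sq_mul_le_of_comp_self_eq {ρ : ℝ} (hρ : 0 ≤ ρ) {X : H} {V Q Qinv : H →L[ℝ] H}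
    (hle : (V - outerProd X).IsPositive) (hQ : Q.IsSymmetric)
    (hQsq : Q ∘L Q = ρ • (1 : H →L[ℝ] H) + V) (hQinv : Q ∘L Qinv = 1) :
    ‖Qinv X‖ ^ 2 * (ρ + ‖X‖ ^ 2) ≤ ‖X‖ ^ 2 := by
  have hQQinv (a : H) : Q (Qinv a) = a := congrArg (fun T : H →L[ℝ] H => T a) hQinv
  have hQ' (a b : H) : ⟪Q a, b⟫ = ⟪a, Q b⟫ := hQ a b
  set y := Qinv X
  set z := Qinv y
  have hXz : ⟪X, z⟫ = ‖y‖ ^ 2 := by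
    rw [← hQQinv X, hQ', hQQinv, real_inner_self_eq_norm_sq]
  have hQQz : ⟪(ρ • (1 : H →L[ℝ] H) + V) z, z⟫ = ‖y‖ ^ 2 := by
    rw [← hQsq, ContinuousLinearMap.comp_apply, hQ', hQQinv, real_inner_self_eq_norm_sq]
  have hquad : ρ * ‖z‖ ^ 2 + ⟪X, z⟫ ^ 2 ≤ ⟪X, z⟫ := by
    have h := sq_inner_le_inner_of_isPositive_sub_outerProd hle z
    simp only [add_apply, smul_apply, one_apply_eq_self, inner_add_left, real_inner_smul_left,
      real_inner_self_eq_norm_sq] at hQQz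
    linarith
  simpa [hXz] using inner_mul_le_norm_sq_of_le_inner hρ X z hquad

end

theorem stmt_11_general
    {H : Type*} [NormedAddCommGroup H] [InnerProductSpace ℝ H]
    (ρ : ℝ) (hρ : 0 < ρ) (X : H)
    (Binv : H →L[ℝ] H)
    (hBinv : Binv ∘L (ρ • (1 : H →L[ℝ] H) + outerProd X) = 1 ∧
      (ρ • (1 : H →L[ℝ] H) + outerProd X) ∘L Binv = 1)
    (V : H →L[ℝ] H) (hle : (V - outerProd X).IsPositive)
    (Q Qinv : H →L[ℝ] H)
    (hQpos : Q.IsPositive)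
    (hQsq : Q ∘L Q = ρ • (1 : H →L[ℝ] H) + V)
    (hQinv : Qinv ∘L Q = 1 ∧ Q ∘L Qinv = 1) :
    ⟪ X, Binv X ⟫ = ‖X‖ ^ 2 / (ρ + ‖X‖ ^ 2) ∧
      ‖Qinv X‖ ^ 2 ≤ ‖X‖ ^ 2 / (ρ + ‖X‖ ^ 2) ∧
      ‖X‖ ^ 2 / (ρ + ‖X‖ ^ 2) ≤ 1 := by
  have hden : 0 < ρ + ‖X‖ ^ 2 := by positivity
  refine ⟨?_, ?_, ?_⟩
  · rw [apply_self_eq_inv_smul_of_comp_smul_one_add_outerProd hρ X hBinv.1,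
      real_inner_smul_right, real_inner_self_eq_norm_sq, div_eq_inv_mul]
  · rw [le_div_iff₀ hden]
    exact norm_sq_mul_le_of_comp_self_eq hρ.le hle hQpos.isSymmetric hQsq hQinv.2
  · rw [div_le_one hden]
    linarith

theorem stmt_11
    {H : Type*} [NormedAddCommGroup H] [InnerProductSpace ℝ H] [CompleteSpace H]
    [SecondCountableTopology H]
    (ρ : ℝ) (hρ : 0 < ρ) (X : H)
    (Binv : H →L[ℝ] H)
    (hBinv : Binv ∘L (ρ • (1 : H →L[ℝ] H) + outerProd X) = 1 ∧
      (ρ • (1 : H →L[ℝ] H) + outerProd X) ∘L Binv = 1)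
    (V : H →L[ℝ] H) (hV : V.IsPositive) (hle : (V - outerProd X).IsPositive)
    (Q Qinv : H →L[ℝ] H)
    (hQpos : Q.IsPositive)
    (hQsq : Q ∘L Q = ρ • (1 : H →L[ℝ] H) + V)
    (hQinv : Qinv ∘L Q = 1 ∧ Q ∘L Qinv = 1) :
    ⟪ X, Binv X ⟫ = ‖X‖ ^ 2 / (ρ + ‖X‖ ^ 2) ∧
      ‖Qinv X‖ ^ 2 ≤ ‖X‖ ^ 2 / (ρ + ‖X‖ ^ 2) ∧
      ‖X‖ ^ 2 / (ρ + ‖X‖ ^ 2) ≤ 1 :=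
  stmt_11_general ρ hρ X Binv hBinv V hle Q Qinv hQpos hQsq hQinv
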